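/- arXiv:2411.14288 — 3 statements merged into one kernel-verified Lean document; each statement's English description precedes it below -/
import Mathlib

section
/- Let G be a finite group with |G| ≥ 2, c0, c1, m positive integers, b_x, M1, M2 ≥ 0, and let σ : ℝ → ℝ be 1-Lipschitz, nondecreasing, and positively homogeneous. For inputs x define the max-pooled network h_{u,w}(x) = Σ_{j∈Fin c1} u_j · max_{g∈G} σ( z_j^{w,x}(g) ). For g∈G and an input x, let g·x denote the translated input (g·x)(i, h) = x(i, g⁻¹h). Fix inputs x_1, …, x_m with ‖x_i‖ ≤ b_x. For l : Fin m → G let A_l be the m×m Gram matrix with entries (A_l)_{i,i'} = ⟨ l_i·x_i , l_{i'}·x_{i'} ⟩ (inner product in ℝ^{c0·|G|}), and set M := max over all l : Fin m → G of the spectral (ℓ2→ℓ2 operator) norm ‖A_l‖. Define g(X) := √( 8·log|G|·M + b_x² + √(8·log|G|·M·b_x²) ). Then E_ε sup_{u : ‖u‖ ≤ M1, w : ‖w‖ ≤ M2} (1/m) Σ_{i=1}^m ε_i · h_{u,w}(x_i) ≤ M1 · M2 · g(X) / √m. -/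
open Finset

/-- Multi-channel group convolution pre-activation channel. -/
noncomputable def gconvChannel {G : Type*} [Group G] [Fintype G] {c0 : ℕ}
    (w : Fin c0 → G → ℝ) (x : Fin c0 → G → ℝ) (g : G) : ℝ :=
  ∑ i : Fin c0, ∑ h : G, w i (g⁻¹ * h) * x i h

/-- One-hidden-layer group convolutional network with max pooling. -/
noncomputable def maxPoolNet {G : Type*} [Group G] [Fintype G] {c0 c1 : ℕ}
    (σ : ℝ → ℝ) (u : Fin c1 → ℝ) (w : Fin c1 → Fin c0 → G → ℝ)
    (x : Fin c0 → G → ℝ) : ℝ :=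
  ∑ j : Fin c1, u j * (Finset.univ.sup' Finset.univ_nonempty
    fun g : G => σ (gconvChannel (w j) x g))

/-- Spectral (ℓ2→ℓ2 operator) norm of a real square matrix. -/
noncomputable def specNorm {m : ℕ} (A : Matrix (Fin m) (Fin m) ℝ) : ℝ :=
  ‖Matrix.toEuclideanCLM (𝕜 := ℝ) A‖

/-!
The bound holds for every sign pattern `ε` separately, even with `√M` in place of the larger
square root. Since `σ 0 = 0` and `σ` is 1-Lipschitz, `|σ t| ≤ |t|`. For a filter channel `v`, let
the max over `G` for input `i` be attained at `gᵢ`; since `z^{v,x}(g) = ⟪v, g⁻¹·x⟫`,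
`|∑ᵢ εᵢ max_g σ(z^{v,xᵢ}(g))| ≤ ∑ᵢ |⟪v, gᵢ⁻¹·xᵢ⟫| = ⟪v, ∑ᵢ ηᵢ gᵢ⁻¹·xᵢ⟫` for signs `ηᵢ`, and this
is at most `‖v‖ √(ηᵀ A_l η) ≤ ‖v‖ √(M m)` with `lᵢ = gᵢ⁻¹`. Cauchy–Schwarz over the output
channels then gives `M1 M2 √(M / m)`.
-/

section

open scoped RealInnerProductSpace
open Matrix

theorem dotProduct_mulVec_le_specNorm_mul {m : ℕ} (A : Matrix (Fin m) (Fin m) ℝ)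
    (v : Fin m → ℝ) : v ⬝ᵥ A *ᵥ v ≤ specNorm A * (v ⬝ᵥ v) := by
  set V : EuclideanSpace ℝ (Fin m) := WithLp.toLp 2 v
  calc v ⬝ᵥ A *ᵥ v = ⟪V, toEuclideanCLM (𝕜 := ℝ) A V⟫ := (inner_toEuclideanCLM A V V).symm
    _ ≤ ‖V‖ * (specNorm A * ‖V‖) :=
      (real_inner_le_norm _ _).trans (by gcongr; exact (toEuclideanCLM (𝕜 := ℝ) A).le_opNorm V)
    _ = specNorm A * (v ⬝ᵥ v) := by
      rw [mul_left_comm, ← sq, ← real_inner_self_eq_norm_sq,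
        EuclideanSpace.inner_eq_star_dotProduct]
      simp [V]

section InnerProductSpace
variable {E : Type*} [NormedAddCommGroup E] [InnerProductSpace ℝ E]

theorem norm_sum_smul_sq_le_specNorm_gram {m : ℕ} (y : Fin m → E) (η : Fin m → ℝ) :
    ‖∑ i, η i • y i‖ ^ 2 ≤ specNorm (gram ℝ y) * (η ⬝ᵥ η) := by
  rw [← real_inner_self_eq_norm_sq, ← star_dotProduct_gram_mulVec]
  exact dotProduct_mulVec_le_specNorm_mul _ η

theorem sum_abs_inner_le_specNorm_gram {m : ℕ} (v : E) (y : Fin m → E) :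
    ∑ i, |⟪v, y i⟫| ≤ ‖v‖ * √(specNorm (gram ℝ y) * m) := by
  set η : Fin m → ℝ := fun i => SignType.sign ⟪v, y i⟫
  have hη : η ⬝ᵥ η ≤ m := by
    calc η ⬝ᵥ η ≤ ∑ _i : Fin m, (1 : ℝ) := by
          refine sum_le_sum fun i _ => ?_
          rcases lt_trichotomy ⟪v, y i⟫ 0 with h | h | h <;> simp [η, h]
      _ = m := by simp
  calc ∑ i, |⟪v, y i⟫| = ⟪v, ∑ i, η i • y i⟫ := by
        simp [η, inner_sum, inner_smul_right, sign_mul_self]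
    _ ≤ ‖v‖ * ‖∑ i, η i • y i‖ := real_inner_le_norm _ _
    _ ≤ ‖v‖ * √(specNorm (gram ℝ y) * m) := by
        gcongr
        refine Real.le_sqrt_of_sq_le ((norm_sum_smul_sq_le_specNorm_gram y η).trans ?_)
        gcongr
        exact norm_nonneg _

end InnerProductSpace

section GroupSignals
variable {ι G : Type*} [Fintype ι] [Fintype G]

def flatten (x : ι → G → ℝ) : EuclideanSpace ℝ (ι × G) := WithLp.toLp 2 (Function.uncurry x)

theorem inner_flatten (x y : ι → G → ℝ) :
    ⟪flatten x, flatten y⟫ = ∑ k, ∑ g, x k g * y k g := by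
  simp [flatten, PiLp.inner_apply, Fintype.sum_prod_type, mul_comm]

theorem norm_flatten (x : ι → G → ℝ) : ‖flatten x‖ = √(∑ k, ∑ g, x k g ^ 2) := by
  simp [flatten, EuclideanSpace.norm_eq, Fintype.sum_prod_type]

variable [Group G]

def leftTranslate (g : G) (x : ι → G → ℝ) : ι → G → ℝ := fun k h => x k (g⁻¹ * h)

noncomputable def translatedGram {m : ℕ} (x : Fin m → ι → G → ℝ) (l : Fin m → G) :
    Matrix (Fin m) (Fin m) ℝ :=
  gram ℝ fun i => flatten (leftTranslate (l i) (x i))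

theorem translatedGram_eq {m : ℕ} (x : Fin m → ι → G → ℝ) (l : Fin m → G) :
    translatedGram x l =
      Matrix.of fun i i' => ∑ k, ∑ g, x i k ((l i)⁻¹ * g) * x i' k ((l i')⁻¹ * g) :=
  Matrix.ext fun _ _ => inner_flatten _ _

end GroupSignals

theorem one_le_eight_mul_log {n : ℕ} (hn : 2 ≤ n) : 1 ≤ 8 * Real.log n := by
  have := Real.log_le_log two_pos (by exact_mod_cast hn : (2 : ℝ) ≤ n)
  linarith [Real.log_two_gt_d9]

variable {G : Type*} [Group G] [Fintype G]

theorem gconvChannel_eq_inner {c0 : ℕ} (v x : Fin c0 → G → ℝ) (g : G) :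
    gconvChannel v x g = ⟪flatten v, flatten (leftTranslate g⁻¹ x)⟫ := by
  rw [inner_flatten, gconvChannel]
  refine sum_congr rfl fun k _ => ?_
  simpa [leftTranslate] using
    (Equiv.sum_comp (Equiv.mulLeft g) fun h => v k (g⁻¹ * h) * x k h).symm

section MaxPooling

theorem abs_le_abs_of_lipschitzWith_one {σ : ℝ → ℝ} (hσ : LipschitzWith 1 σ) (h0 : σ 0 = 0)
    (t : ℝ) : |σ t| ≤ |t| := by
  simpa [h0, Real.dist_eq] using hσ.dist_le_mul t 0

variable [Nonempty G] {σ : ℝ → ℝ} {c0 m : ℕ} {x : Fin m → Fin c0 → G → ℝ} {M : ℝ}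

theorem sum_abs_sup'_gconvChannel_le (hσ : ∀ t, |σ t| ≤ |t|)
    (hM : ∀ l : Fin m → G, specNorm (translatedGram x l) ≤ M)
    (v : Fin c0 → G → ℝ) :
    ∑ i, |univ.sup' univ_nonempty fun g => σ (gconvChannel v (x i) g)|
      ≤ √(M * m) * √(∑ k, ∑ g, v k g ^ 2) := by
  choose g _ hg using fun i => exists_mem_eq_sup' univ_nonempty fun g => σ (gconvChannel v (x i) g)
  calc ∑ i, |univ.sup' univ_nonempty fun g => σ (gconvChannel v (x i) g)|
      ≤ ∑ i, |gconvChannel v (x i) (g i)| := sum_le_sum fun i _ => hg i ▸ hσ _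
    _ = ∑ i, |⟪flatten v, flatten (leftTranslate (g i)⁻¹ (x i))⟫| := by
        simp only [gconvChannel_eq_inner]
    _ ≤ ‖flatten v‖ * √(specNorm (translatedGram x fun i => (g i)⁻¹) * m) :=
        sum_abs_inner_le_specNorm_gram _ _
    _ ≤ √(M * m) * √(∑ k, ∑ g, v k g ^ 2) := by
        rw [norm_flatten, mul_comm]
        gcongr
        exact hM _

theorem sum_mul_maxPoolNet_le {c1 : ℕ} (hσ : ∀ t, |σ t| ≤ |t|)
    (hM : ∀ l : Fin m → G, specNorm (translatedGram x l) ≤ M)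
    (ε : Fin m → ℝ) (hε : ∀ i, |ε i| ≤ 1) (u : Fin c1 → ℝ) (w : Fin c1 → Fin c0 → G → ℝ) :
    ∑ i, ε i * maxPoolNet σ u w (x i)
      ≤ √(M * m) * √(∑ j, u j ^ 2) * √(∑ j, ∑ k, ∑ g, w j k g ^ 2) := by
  set P : Fin c1 → Fin m → ℝ := fun j i =>
    univ.sup' univ_nonempty fun g => σ (gconvChannel (w j) (x i) g)
  have hP : ∀ j, |∑ i, ε i * P j i| ≤ √(M * m) * √(∑ k, ∑ g, w j k g ^ 2) := fun j =>
    calc |∑ i, ε i * P j i| ≤ ∑ i, |P j i| :=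
          (abs_sum_le_sum_abs _ _).trans <| sum_le_sum fun i _ => by
            rw [abs_mul]; exact mul_le_of_le_one_left (abs_nonneg _) (hε i)
      _ ≤ _ := sum_abs_sup'_gconvChannel_le hσ hM (w j)
  calc ∑ i, ε i * maxPoolNet σ u w (x i) = ∑ j, u j * ∑ i, ε i * P j i := by
        simp only [maxPoolNet, mul_sum]
        rw [sum_comm]
        exact sum_congr rfl fun j _ => sum_congr rfl fun i _ => by ring
    _ ≤ ∑ j, |u j| * (√(M * m) * √(∑ k, ∑ g, w j k g ^ 2)) := sum_le_sum fun j _ =>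
        (le_abs_self _).trans <| (abs_mul _ _).trans_le <| by gcongr; exact hP j
    _ = √(M * m) * ∑ j, |u j| * √(∑ k, ∑ g, w j k g ^ 2) := by
        rw [mul_sum]; exact sum_congr rfl fun j _ => by ring
    _ ≤ √(M * m) * (√(∑ j, |u j| ^ 2) * √(∑ j, √(∑ k, ∑ g, w j k g ^ 2) ^ 2)) := by
        gcongr; exact Real.sum_mul_le_sqrt_mul_sqrt _ _ _
    _ = √(M * m) * √(∑ j, u j ^ 2) * √(∑ j, ∑ k, ∑ g, w j k g ^ 2) := by
        simp only [sq_abs, mul_assoc]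
        congr 3
        exact sum_congr rfl fun j _ => Real.sq_sqrt (by positivity)

theorem sSup_signed_average_maxPoolNet_le {c1 : ℕ} (hσ : ∀ t, |σ t| ≤ |t|)
    (hM : ∀ l : Fin m → G, specNorm (translatedGram x l) ≤ M)
    (ε : Fin m → ℝ) (hε : ∀ i, |ε i| ≤ 1) {M1 M2 : ℝ} (hM1 : 0 ≤ M1) (hM2 : 0 ≤ M2) :
    sSup {r : ℝ | ∃ (u : Fin c1 → ℝ) (w : Fin c1 → Fin c0 → G → ℝ),
          √(∑ j, u j ^ 2) ≤ M1 ∧ √(∑ j, ∑ k, ∑ g, w j k g ^ 2) ≤ M2 ∧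
          r = (1 / (m : ℝ)) * ∑ i, ε i * maxPoolNet σ u w (x i)}
      ≤ M1 * M2 * √M / √m := by
  refine Real.sSup_le ?_ (by positivity)
  rintro _ ⟨u, w, hu, hw, rfl⟩
  have hscale : 1 / (m : ℝ) * √(M * m) = √M / √m := by
    rw [Real.sqrt_mul' M m.cast_nonneg, mul_left_comm, one_div_mul_eq_div, Real.sqrt_div_self',
      mul_one_div]
  calc 1 / (m : ℝ) * ∑ i, ε i * maxPoolNet σ u w (x i)
      ≤ 1 / (m : ℝ) * (√(M * m) * √(∑ j, u j ^ 2) * √(∑ j, ∑ k, ∑ g, w j k g ^ 2)) := by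
        gcongr; exact sum_mul_maxPoolNet_le hσ hM ε hε u w
    _ = √M / √m * √(∑ j, u j ^ 2) * √(∑ j, ∑ k, ∑ g, w j k g ^ 2) := by
        rw [← hscale]; ring
    _ ≤ √M / √m * M1 * M2 := by gcongr
    _ = M1 * M2 * √M / √m := by ring

end MaxPooling

end

theorem rademacher_bound_max_pooling_general
    {G : Type*} [Group G] [Fintype G] (hG : 2 ≤ Fintype.card G)
    (c0 c1 m : ℕ)
    (bx M1 M2 : ℝ) (hM1 : 0 ≤ M1) (hM2 : 0 ≤ M2)
    (σ : ℝ → ℝ) (hσL : LipschitzWith 1 σ)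
    (hσh : ∀ a t : ℝ, 0 ≤ a → σ (a * t) = a * σ t)
    (x : Fin m → Fin c0 → G → ℝ)
    (M : ℝ)
    (hM : M = ⨆ l : Fin m → G, specNorm (Matrix.of fun i i' : Fin m =>
      ∑ k : Fin c0, ∑ g : G, x i k ((l i)⁻¹ * g) * x i' k ((l i')⁻¹ * g))) :
    (∑ ε : Fin m → Bool,
        sSup {r : ℝ | ∃ (u : Fin c1 → ℝ) (w : Fin c1 → Fin c0 → G → ℝ),
          Real.sqrt (∑ j : Fin c1, (u j) ^ 2) ≤ M1 ∧
          Real.sqrt (∑ j : Fin c1, ∑ k : Fin c0, ∑ g : G, (w j k g) ^ 2) ≤ M2 ∧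
          r = (1 / (m : ℝ)) * ∑ i : Fin m,
            (if ε i then (1 : ℝ) else -1) * maxPoolNet σ u w (x i)}) / 2 ^ m
      ≤ M1 * M2 *
          Real.sqrt (8 * Real.log (Fintype.card G) * M + bx ^ 2 +
            Real.sqrt (8 * Real.log (Fintype.card G) * M * bx ^ 2)) /
        Real.sqrt m := by
  have : Nonempty G := Fintype.card_pos_iff.mp (by omega)
  have hσ : ∀ t, |σ t| ≤ |t| :=
    abs_le_abs_of_lipschitzWith_one hσL (by simpa using hσh 0 0 le_rfl)
  have hgram : ∀ l : Fin m → G, specNorm (translatedGram x l) ≤ M := fun l => by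
    rw [translatedGram_eq, hM]
    exact Finite.le_ciSup_of_le l le_rfl
  have hM0 : 0 ≤ M := (norm_nonneg _).trans (hgram fun _ => Classical.arbitrary G)
  have hsign : ∀ (ε : Fin m → Bool) i, |if ε i then (1 : ℝ) else -1| ≤ 1 := fun ε i => by
    split_ifs <;> simp
  have hM_le : M ≤ 8 * Real.log (Fintype.card G) * M + bx ^ 2 +
      √(8 * Real.log (Fintype.card G) * M * bx ^ 2) := by
    nlinarith [one_le_eight_mul_log hG, sq_nonneg bx, Real.sqrt_nonneg
      (8 * Real.log (Fintype.card G) * M * bx ^ 2)]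
  rw [div_le_iff₀ (by positivity)]
  calc _ ≤ ∑ _ε : Fin m → Bool, M1 * M2 * √M / √m := sum_le_sum fun ε _ =>
        sSup_signed_average_maxPoolNet_le hσ hgram _ (hsign ε) hM1 hM2
    _ = M1 * M2 * √M / √m * 2 ^ m := by simp [mul_comm]
    _ ≤ _ := by gcongr

theorem rademacher_bound_max_pooling
    {G : Type*} [Group G] [Fintype G] (hG : 2 ≤ Fintype.card G)
    (c0 c1 m : ℕ) (hc0 : 0 < c0) (hc1 : 0 < c1) (hm : 0 < m)
    (bx M1 M2 : ℝ) (hbx : 0 ≤ bx) (hM1 : 0 ≤ M1) (hM2 : 0 ≤ M2)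
    (σ : ℝ → ℝ) (hσL : LipschitzWith 1 σ) (hσmono : Monotone σ)
    (hσh : ∀ a t : ℝ, 0 ≤ a → σ (a * t) = a * σ t)
    (x : Fin m → Fin c0 → G → ℝ)
    (hx : ∀ i, Real.sqrt (∑ k : Fin c0, ∑ g : G, (x i k g) ^ 2) ≤ bx)
    (M : ℝ)
    (hM : M = ⨆ l : Fin m → G, specNorm (Matrix.of fun i i' : Fin m =>
      ∑ k : Fin c0, ∑ g : G, x i k ((l i)⁻¹ * g) * x i' k ((l i')⁻¹ * g))) :
    (∑ ε : Fin m → Bool,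
        sSup {r : ℝ | ∃ (u : Fin c1 → ℝ) (w : Fin c1 → Fin c0 → G → ℝ),
          Real.sqrt (∑ j : Fin c1, (u j) ^ 2) ≤ M1 ∧
          Real.sqrt (∑ j : Fin c1, ∑ k : Fin c0, ∑ g : G, (w j k g) ^ 2) ≤ M2 ∧
          r = (1 / (m : ℝ)) * ∑ i : Fin m,
            (if ε i then (1 : ℝ) else -1) * maxPoolNet σ u w (x i)}) / 2 ^ m
      ≤ M1 * M2 *
          Real.sqrt (8 * Real.log (Fintype.card G) * M + bx ^ 2 +
            Real.sqrt (8 * Real.log (Fintype.card G) * M * bx ^ 2)) /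
        Real.sqrt m :=
  rademacher_bound_max_pooling_general hG c0 c1 m bx M1 M2 hM1 hM2 σ hσL hσh x M hM
end

section
/- Let G be a finite abelian (additive) group and let f : G → ℂ be a nonzero function. Define the Fourier transform f̂ on the dual group of additive characters by f̂(χ) = Σ_{g∈G} χ(g) · f(g) for χ : G → ℂ an additive character. Then |supp f| · |supp f̂| ≥ |G|, where supp f = {g ∈ G : f(g) ≠ 0} and supp f̂ = {χ : f̂(χ) ≠ 0}. -/
open Finset

theorem uncertainty_principle_finite_abelian
    {G : Type*} [AddCommGroup G] [Fintype G]
    (f : G → ℂ) (hf : f ≠ 0) :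
    (Fintype.card G : ℕ) ≤
      {g : G | f g ≠ 0}.ncard *
        {χ : AddChar G ℂ | (∑ g : G, χ g * f g) ≠ 0}.ncard := by
  classical
  set F : AddChar G ℂ → ℂ := fun χ => ∑ g : G, χ g * f g with hF
  set A : Finset G := Finset.univ.filter (fun g => f g ≠ 0) with hA
  set B : Finset (AddChar G ℂ) := Finset.univ.filter (fun χ => F χ ≠ 0) with hB
  have hncardA : {g : G | f g ≠ 0}.ncard = A.card := by
    rw [hA, Set.ncard_eq_toFinset_card']
    congr 1
    ext g
    simp
  have hncardB : {χ : AddChar G ℂ | (∑ g : G, χ g * f g) ≠ 0}.ncard = B.card := by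
    rw [hB, Set.ncard_eq_toFinset_card']
    congr 1
    ext χ
    simp [hF]
  rw [hncardA, hncardB]
  -- pick g0 maximizing ‖f g‖
  obtain ⟨g0, -, hg0⟩ := Finset.exists_max_image Finset.univ (fun g => ‖f g‖)
    ⟨Classical.arbitrary G, Finset.mem_univ _⟩
  have hfg0 : f g0 ≠ 0 := by
    intro h0
    apply hf
    funext g
    have := hg0 g (Finset.mem_univ g)
    rw [h0, norm_zero] at this
    exact norm_le_zero_iff.mp this
  set M : ℝ := ‖f g0‖ with hM
  have hMpos : 0 < M := norm_pos_iff.mpr hfg0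
  -- Fourier inversion at g0
  have hinv : ∑ χ : AddChar G ℂ, χ (-g0) * F χ = (Fintype.card G : ℂ) * f g0 := by
    simp only [hF, Finset.mul_sum]
    rw [Finset.sum_comm]
    have key : ∀ g : G, ∑ χ : AddChar G ℂ, χ (-g0) * (χ g * f g)
        = (if g = g0 then (Fintype.card G : ℂ) * f g else 0) := by
      intro g
      have h1 : ∑ χ : AddChar G ℂ, χ (-g0) * (χ g * f g)
          = (∑ χ : AddChar G ℂ, χ (g + -g0)) * f g := by
        rw [Finset.sum_mul]
        refine Finset.sum_congr rfl fun χ _ => ?_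
        rw [AddChar.map_add_eq_mul]
        ring
      rw [h1, AddChar.sum_apply_eq_ite]
      have : g + -g0 = 0 ↔ g = g0 := by
        rw [← sub_eq_add_neg, sub_eq_zero]
      by_cases h : g = g0
      · simp [this, h]
      · simp [this, h]
    simp only [key]
    simp
  -- bound each |F χ|
  have hFbound : ∀ χ : AddChar G ℂ, ‖F χ‖ ≤ A.card * M := by
    intro χ
    have hsupp : ∀ g : G, g ∉ A → χ g * f g = 0 := by
      intro g hg
      simp only [hA, Finset.mem_filter, Finset.mem_univ, true_and, not_not] at hg
      rw [hg, mul_zero]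
    have : F χ = ∑ g ∈ A, χ g * f g := by
      rw [hF]
      exact (Finset.sum_subset (Finset.subset_univ A) (fun g _ hg => hsupp g hg)).symm
    rw [this]
    calc ‖∑ g ∈ A, χ g * f g‖ ≤ ∑ g ∈ A, ‖χ g * f g‖ := norm_sum_le _ _
      _ ≤ ∑ g ∈ A, M := by
          refine Finset.sum_le_sum fun g _ => ?_
          rw [norm_mul, AddChar.norm_apply, one_mul]
          exact hg0 g (Finset.mem_univ g)
      _ = A.card * M := by rw [Finset.sum_const, nsmul_eq_mul]
  -- main estimate
  have hmain : (Fintype.card G : ℝ) * M ≤ (A.card * B.card : ℝ) * M := by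
    have h1 : (Fintype.card G : ℝ) * M = ‖∑ χ : AddChar G ℂ, χ (-g0) * F χ‖ := by
      rw [hinv, norm_mul, Complex.norm_natCast]
    rw [h1]
    have h2 : ∑ χ : AddChar G ℂ, χ (-g0) * F χ = ∑ χ ∈ B, χ (-g0) * F χ := by
      refine (Finset.sum_subset (Finset.subset_univ B) fun χ _ hχ => ?_).symm
      simp only [hB, Finset.mem_filter, Finset.mem_univ, true_and, not_not] at hχ
      rw [hχ, mul_zero]
    rw [h2]
    calc ‖∑ χ ∈ B, χ (-g0) * F χ‖ ≤ ∑ χ ∈ B, ‖χ (-g0) * F χ‖ := norm_sum_le _ _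
      _ ≤ ∑ χ ∈ B, (A.card : ℝ) * M := by
          refine Finset.sum_le_sum fun χ _ => ?_
          rw [norm_mul, AddChar.norm_apply, one_mul]
          exact hFbound χ
      _ = (B.card : ℝ) * ((A.card : ℝ) * M) := by rw [Finset.sum_const, nsmul_eq_mul]
      _ = (A.card * B.card : ℝ) * M := by ring
  have := le_of_mul_le_mul_right (by linarith [hmain] : (Fintype.card G : ℝ) * M ≤ (↑A.card * ↑B.card) * M) hMpos
  exact_mod_cast this
end

section
/- Let m be a positive integer, let B be an m×m real positive semidefinite matrix, and let β ≥ 0 satisfy 8·β·‖B‖_{2→2} < 1, where ‖B‖_{2→2} is the spectral (ℓ2→ℓ2 operator) norm. Then the Rademacher average satisfies 2^{-m} Σ_{ε∈{-1,1}^m} exp( β · εᵀ B ε ) ≤ exp( β · trace(B) / (1 − 8·β·‖B‖_{2→2}) ). -/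
/-
Gaussian linearization. Diagonalizing `B` gives `C` with `Cᵀ C = B` and `C Cᵀ` diagonal with the
eigenvalues `λₖ` of `B`. Writing `exp (|C ε|² / 2)` as a Gaussian integral of `exp ⟪C ε, x⟫` and
summing over `ε` under the integral, `cosh t ≤ exp (t² / 2)` bounds the sign average of
`exp ⟪ε, Cᵀ x⟫` by `exp (|Cᵀ x|² / 2) = exp (∑ λₖ xₖ² / 2)`; the remaining Gaussian integral is
`∏ (1 - λₖ)^(-1/2)`. Applied to `2β B`, each factor `(1 - 2βλ)^(-1/2)` is at most
`exp (βλ / (1 - 8β‖B‖))` because `log (1 - x) ≥ -x / (1 - x)` and `λ ≤ ‖B‖`.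
-/

open Finset

open Real MeasureTheory Matrix

lemma exp_mul_sub_sq_div_two_eq (a x : ℝ) :
    exp (a * x - x ^ 2 / 2) = exp (a ^ 2 / 2) * exp (-(1 / 2) * (x - a) ^ 2) := by
  rw [← exp_add]; ring_nf

lemma integrable_exp_mul_sub_sq_div_two (a : ℝ) :
    Integrable fun x : ℝ => exp (a * x - x ^ 2 / 2) := by
  simp_rw [exp_mul_sub_sq_div_two_eq a]
  exact ((integrable_exp_neg_mul_sq (by norm_num)).comp_sub_right a).const_mul _

lemma integral_exp_mul_sub_sq_div_two (a : ℝ) :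
    ∫ x : ℝ, exp (a * x - x ^ 2 / 2) = √(2 * π) * exp (a ^ 2 / 2) := by
  simp_rw [exp_mul_sub_sq_div_two_eq a]
  rw [integral_const_mul, integral_sub_right_eq_self (fun x => exp (-(1 / 2) * x ^ 2)),
    integral_gaussian, mul_comm]
  norm_num [div_div_eq_mul_div, mul_comm]

lemma exp_mul_sq_sub_sq_div_two_eq (a x : ℝ) :
    exp ((a * x ^ 2 - x ^ 2) / 2) = exp (-((1 - a) / 2) * x ^ 2) := by
  ring_nf

lemma integrable_exp_mul_sq_sub_sq_div_two {a : ℝ} (ha : a < 1) :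
    Integrable fun x : ℝ => exp ((a * x ^ 2 - x ^ 2) / 2) := by
  simp_rw [exp_mul_sq_sub_sq_div_two_eq a]
  exact integrable_exp_neg_mul_sq (by linarith)

lemma integral_exp_mul_sq_sub_sq_div_two {a : ℝ} (ha : a < 1) :
    ∫ x : ℝ, exp ((a * x ^ 2 - x ^ 2) / 2) = √(2 * π) / √(1 - a) := by
  simp_rw [exp_mul_sq_sub_sq_div_two_eq a]
  rw [integral_gaussian, ← sqrt_div' _ (by linarith : 0 ≤ 1 - a)]
  congr 1
  field_simp

section

variable {ι κ : Type*} [Fintype ι] [Fintype κ]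

lemma exp_dotProduct_sub_half_eq_prod (y x : κ → ℝ) :
    exp (y ⬝ᵥ x - x ⬝ᵥ x / 2) = ∏ k, exp (y k * x k - x k ^ 2 / 2) := by
  rw [← exp_sum, sum_sub_distrib, ← sum_div]
  simp only [dotProduct, sq]

lemma integrable_exp_dotProduct_sub_half (y : κ → ℝ) :
    Integrable fun x : κ → ℝ => exp (y ⬝ᵥ x - x ⬝ᵥ x / 2) := by
  simp_rw [exp_dotProduct_sub_half_eq_prod]
  exact Integrable.fintype_prod fun k => integrable_exp_mul_sub_sq_div_two (y k)

lemma integral_exp_dotProduct_sub_half (y : κ → ℝ) :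
    ∫ x : κ → ℝ, exp (y ⬝ᵥ x - x ⬝ᵥ x / 2) =
      √(2 * π) ^ Fintype.card κ * exp (y ⬝ᵥ y / 2) := by
  simp_rw [exp_dotProduct_sub_half_eq_prod]
  rw [integral_fintype_prod_volume_eq_prod (fun k x => exp (y k * x - x ^ 2 / 2))]
  simp_rw [integral_exp_mul_sub_sq_div_two]
  rw [prod_mul_distrib, prod_const, card_univ, dotProduct, sum_div, exp_sum]
  simp only [sq]

lemma exp_diagonal_quadForm_eq_prod [DecidableEq κ] (d x : κ → ℝ) :
    exp ((x ⬝ᵥ diagonal d *ᵥ x - x ⬝ᵥ x) / 2) = ∏ k, exp ((d k * x k ^ 2 - x k ^ 2) / 2) := by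
  rw [← exp_sum, ← sum_div, sum_sub_distrib]
  simp only [dotProduct, mulVec_diagonal, sq]
  congr 3; exact sum_congr rfl fun k _ => by ring

lemma integrable_exp_diagonal_quadForm [DecidableEq κ] {d : κ → ℝ} (hd : ∀ k, d k < 1) :
    Integrable fun x : κ → ℝ => exp ((x ⬝ᵥ diagonal d *ᵥ x - x ⬝ᵥ x) / 2) := by
  simp_rw [exp_diagonal_quadForm_eq_prod]
  exact Integrable.fintype_prod fun k => integrable_exp_mul_sq_sub_sq_div_two (hd k)

lemma integral_exp_diagonal_quadForm [DecidableEq κ] {d : κ → ℝ} (hd : ∀ k, d k < 1) :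
    ∫ x : κ → ℝ, exp ((x ⬝ᵥ diagonal d *ᵥ x - x ⬝ᵥ x) / 2) =
      √(2 * π) ^ Fintype.card κ * ∏ k, (√(1 - d k))⁻¹ := by
  simp_rw [exp_diagonal_quadForm_eq_prod]
  rw [integral_fintype_prod_volume_eq_prod (fun k x => exp ((d k * x ^ 2 - x ^ 2) / 2))]
  simp_rw [integral_exp_mul_sq_sub_sq_div_two (hd _), div_eq_mul_inv]
  rw [prod_mul_distrib, prod_const, card_univ]

def signVec (ε : ι → Bool) : ι → ℝ := fun j => if ε j then 1 else -1

lemma sum_exp_signVec_dotProduct_eq_prod [DecidableEq ι] (w : ι → ℝ) :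
    ∑ ε : ι → Bool, exp (signVec ε ⬝ᵥ w) = ∏ j, (exp (w j) + exp (-w j)) := by
  simp only [signVec, dotProduct, exp_sum]
  rw [← Fintype.prod_sum (fun j (b : Bool) => exp ((if b then 1 else -1) * w j))]
  simp

lemma sum_exp_signVec_dotProduct_le [DecidableEq ι] (w : ι → ℝ) :
    ∑ ε : ι → Bool, exp (signVec ε ⬝ᵥ w) ≤ 2 ^ Fintype.card ι * exp (w ⬝ᵥ w / 2) := by
  rw [sum_exp_signVec_dotProduct_eq_prod, dotProduct, sum_div, exp_sum, ← card_univ,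
    ← prod_const, ← prod_mul_distrib]
  gcongr with j
  have := cosh_le_exp_half_sq (w j)
  rw [cosh_eq, sq] at this
  linarith

lemma mulVec_dotProduct_eq_dotProduct_transpose_mulVec (C : Matrix κ ι ℝ) (v : ι → ℝ)
    (x : κ → ℝ) : (C *ᵥ v) ⬝ᵥ x = v ⬝ᵥ (Cᵀ *ᵥ x) := by
  rw [dotProduct_comm, dotProduct_mulVec, mulVec_transpose, dotProduct_comm]

lemma sum_exp_half_mulVec_signVec_le [DecidableEq ι] [DecidableEq κ] {C : Matrix κ ι ℝ}
    {d : κ → ℝ} (hC : C * Cᵀ = diagonal d) (hd : ∀ k, d k < 1) :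
    ∑ ε : ι → Bool, exp ((C *ᵥ signVec ε) ⬝ᵥ (C *ᵥ signVec ε) / 2) ≤
      2 ^ Fintype.card ι * ∏ k, (√(1 - d k))⁻¹ := by
  have hpointwise (x : κ → ℝ) : ∑ ε : ι → Bool, exp ((C *ᵥ signVec ε) ⬝ᵥ x - x ⬝ᵥ x / 2) ≤
      2 ^ Fintype.card ι * exp ((x ⬝ᵥ diagonal d *ᵥ x - x ⬝ᵥ x) / 2) := by
    have hquad : x ⬝ᵥ diagonal d *ᵥ x = (Cᵀ *ᵥ x) ⬝ᵥ (Cᵀ *ᵥ x) := by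
      rw [← hC, ← mulVec_mulVec, ← mulVec_dotProduct_eq_dotProduct_transpose_mulVec,
        dotProduct_comm]
    simp_rw [sub_eq_add_neg, exp_add, ← sum_mul, mulVec_dotProduct_eq_dotProduct_transpose_mulVec,
      hquad, add_div, exp_add, ← mul_assoc, ← neg_div]
    gcongr
    exact sum_exp_signVec_dotProduct_le _
  refine le_of_mul_le_mul_left ?_ (by positivity : 0 < √(2 * π) ^ Fintype.card κ)
  calc √(2 * π) ^ Fintype.card κ *
        ∑ ε : ι → Bool, exp ((C *ᵥ signVec ε) ⬝ᵥ (C *ᵥ signVec ε) / 2)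
      = ∑ ε : ι → Bool, ∫ x, exp ((C *ᵥ signVec ε) ⬝ᵥ x - x ⬝ᵥ x / 2) := by
        simp_rw [mul_sum, integral_exp_dotProduct_sub_half]
    _ = ∫ x, ∑ ε : ι → Bool, exp ((C *ᵥ signVec ε) ⬝ᵥ x - x ⬝ᵥ x / 2) :=
        (integral_finsetSum _ fun ε _ => integrable_exp_dotProduct_sub_half _).symm
    _ ≤ ∫ x, 2 ^ Fintype.card ι * exp ((x ⬝ᵥ diagonal d *ᵥ x - x ⬝ᵥ x) / 2) :=
        integral_mono (integrable_finsetSum _ fun ε _ => integrable_exp_dotProduct_sub_half _)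
          ((integrable_exp_diagonal_quadForm hd).const_mul _) hpointwise
    _ = √(2 * π) ^ Fintype.card κ * (2 ^ Fintype.card ι * ∏ k, (√(1 - d k))⁻¹) := by
        rw [integral_const_mul, integral_exp_diagonal_quadForm hd]; ring

end

lemma Matrix.PosSemidef.exists_transpose_mul_self_and_mul_transpose_eq_diagonal
    {n : Type*} [Fintype n] [DecidableEq n] {B : Matrix n n ℝ} (hB : B.PosSemidef) :
    ∃ C : Matrix n n ℝ, Cᵀ * C = B ∧ C * Cᵀ = diagonal hB.1.eigenvalues := by
  set U : Matrix n n ℝ := (hB.1.eigenvectorUnitary : Matrix n n ℝ)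
  have hUU : Uᵀ * U = 1 := Matrix.mem_unitaryGroup_iff'.mp hB.1.eigenvectorUnitary.2
  have hsq : (diagonal fun i => √(hB.1.eigenvalues i)) *
      diagonal (fun i => √(hB.1.eigenvalues i)) = diagonal hB.1.eigenvalues := by
    rw [diagonal_mul_diagonal]
    simp_rw [mul_self_sqrt (hB.eigenvalues_nonneg _)]
  refine ⟨diagonal (fun i => √(hB.1.eigenvalues i)) * Uᵀ, ?_, ?_⟩
  · conv_rhs => rw [hB.1.spectral_theorem, Unitary.conjStarAlgAut_apply]
    rw [transpose_mul, diagonal_transpose, transpose_transpose, ← mul_assoc, mul_assoc U, hsq]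
    rfl
  · rw [transpose_mul, diagonal_transpose, transpose_transpose, mul_assoc, ← mul_assoc Uᵀ, hUU,
      one_mul, hsq]

lemma Matrix.PosSemidef.sum_exp_mul_signVec_dotProduct_mulVec_le {n : Type*} [Fintype n]
    [DecidableEq n] {B : Matrix n n ℝ} (hB : B.PosSemidef) {β : ℝ} (hβ0 : 0 ≤ β)
    (hβ : ∀ i, 2 * β * hB.1.eigenvalues i < 1) :
    ∑ ε : n → Bool, exp (β * (signVec ε ⬝ᵥ B *ᵥ signVec ε)) ≤
      2 ^ Fintype.card n * ∏ i, (√(1 - 2 * β * hB.1.eigenvalues i))⁻¹ := by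
  obtain ⟨C, hCB, hCC⟩ := hB.exists_transpose_mul_self_and_mul_transpose_eq_diagonal
  set D := √(2 * β) • C
  have hsqrt : √(2 * β) * √(2 * β) = 2 * β := mul_self_sqrt (by positivity)
  have hquad (v : n → ℝ) : β * (v ⬝ᵥ B *ᵥ v) = (D *ᵥ v) ⬝ᵥ (D *ᵥ v) / 2 := by
    rw [mulVec_dotProduct_eq_dotProduct_transpose_mulVec, mulVec_mulVec, transpose_smul,
      smul_mul_smul, hsqrt, hCB, smul_mulVec, dotProduct_smul, smul_eq_mul]
    ring
  have hDD : D * Dᵀ = diagonal fun i => 2 * β * hB.1.eigenvalues i := by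
    rw [transpose_smul, smul_mul_smul, hsqrt, hCC, ← diagonal_smul]; rfl
  simp_rw [hquad]
  exact sum_exp_half_mulVec_signVec_le hDD hβ

lemma abs_eigenvalues_le_specNorm {m : ℕ} {B : Matrix (Fin m) (Fin m) ℝ} (hB : B.IsHermitian)
    (i : Fin m) : |hB.eigenvalues i| ≤ specNorm B := by
  have : Nontrivial (EuclideanSpace ℝ (Fin m)) := by
    have : Nonempty (Fin m) := ⟨i⟩
    infer_instance
  have hmem : hB.eigenvalues i ∈ spectrum ℝ (toEuclideanCLM (𝕜 := ℝ) B) := by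
    rw [AlgEquiv.spectrum_eq]
    exact hB.eigenvalues_mem_spectrum_real i
  exact spectrum.norm_le_norm_of_mem hmem

lemma inv_sqrt_one_sub_le_exp {x d : ℝ} (hx : 0 ≤ x) (hd : 0 < d) (hxd : x + d ≤ 1) :
    (√(1 - x))⁻¹ ≤ exp (x / (2 * d)) := by
  have hpos : 0 < 1 - x := by linarith
  have hlog : -(x / d) ≤ log (1 - x) :=
    calc -(x / d) ≤ -(x / (1 - x)) := neg_le_neg (div_le_div_of_nonneg_left hx hd (by linarith))
      _ = 1 - (1 - x)⁻¹ := by field_simp; ring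
      _ ≤ log (1 - x) := one_sub_inv_le_log_of_pos hpos
  have hexp : exp (-(x / d)) ≤ 1 - x := by rwa [← exp_le_exp, exp_log hpos] at hlog
  calc (√(1 - x))⁻¹ ≤ (√(exp (-(x / d))))⁻¹ := inv_anti₀ (by positivity) (sqrt_le_sqrt hexp)
    _ = exp (x / (2 * d)) := by rw [← exp_half, ← exp_neg]; ring_nf

lemma prod_inv_sqrt_one_sub_eigenvalues_le_exp_trace {m : ℕ} {B : Matrix (Fin m) (Fin m) ℝ}
    (hB : B.PosSemidef) {β : ℝ} (hβ0 : 0 ≤ β) (hβ : 8 * β * specNorm B < 1) :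
    ∏ i, (√(1 - 2 * β * hB.1.eigenvalues i))⁻¹ ≤
      exp (β * B.trace / (1 - 8 * β * specNorm B)) := by
  rw [hB.1.trace_eq_sum_eigenvalues, RCLike.ofReal_real_eq_id, mul_sum, sum_div, exp_sum]
  gcongr with i
  have hev := abs_le.mp (abs_eigenvalues_le_specNorm hB.1 i)
  refine (inv_sqrt_one_sub_le_exp (d := 1 - 8 * β * specNorm B)
    (mul_nonneg (by positivity) (hB.eigenvalues_nonneg i)) (by linarith) (by nlinarith)).trans_eq ?_
  rw [mul_assoc, mul_div_mul_left _ _ two_ne_zero, id]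

theorem rademacher_chaos_mgf_bound_general
    (m : ℕ) (B : Matrix (Fin m) (Fin m) ℝ) (hB : B.PosSemidef)
    (β : ℝ) (hβ0 : 0 ≤ β) (hβ : 8 * β * specNorm B < 1) :
    (∑ ε : Fin m → Bool,
        Real.exp (β * ∑ j : Fin m, ∑ k : Fin m,
          (if ε j then (1 : ℝ) else -1) * B j k * (if ε k then (1 : ℝ) else -1)))
        / 2 ^ m
      ≤ Real.exp (β * B.trace / (1 - 8 * β * specNorm B)) := by
  have hform (ε : Fin m → Bool) : ∑ j, ∑ k,
      (if ε j then (1 : ℝ) else -1) * B j k * (if ε k then (1 : ℝ) else -1) =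
      signVec ε ⬝ᵥ B *ᵥ signVec ε := by
    simp only [signVec, dotProduct, mulVec, mul_sum, mul_assoc]
  have hd (i : Fin m) : 2 * β * hB.1.eigenvalues i < 1 := by
    have := abs_le.mp (abs_eigenvalues_le_specNorm hB.1 i)
    nlinarith
  simp_rw [hform, div_le_iff₀ (by positivity : (0 : ℝ) < 2 ^ m)]
  calc ∑ ε : Fin m → Bool, exp (β * (signVec ε ⬝ᵥ B *ᵥ signVec ε))
      ≤ 2 ^ m * ∏ i, (√(1 - 2 * β * hB.1.eigenvalues i))⁻¹ := by
        simpa using hB.sum_exp_mul_signVec_dotProduct_mulVec_le hβ0 hd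
    _ ≤ 2 ^ m * exp (β * B.trace / (1 - 8 * β * specNorm B)) := by
        gcongr
        exact prod_inv_sqrt_one_sub_eigenvalues_le_exp_trace hB hβ0 hβ
    _ = exp (β * B.trace / (1 - 8 * β * specNorm B)) * 2 ^ m := mul_comm _ _

theorem rademacher_chaos_mgf_bound
    (m : ℕ) (hm : 0 < m) (B : Matrix (Fin m) (Fin m) ℝ) (hB : B.PosSemidef)
    (β : ℝ) (hβ0 : 0 ≤ β) (hβ : 8 * β * specNorm B < 1) :
    (∑ ε : Fin m → Bool,
        Real.exp (β * ∑ j : Fin m, ∑ k : Fin m,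
          (if ε j then (1 : ℝ) else -1) * B j k * (if ε k then (1 : ℝ) else -1)))
        / 2 ^ m
      ≤ Real.exp (β * B.trace / (1 - 8 * β * specNorm B)) :=
  rademacher_chaos_mgf_bound_general m B hB β hβ0 hβ
end
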